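/- arXiv:2502.20496 — 3 statements merged into one kernel-verified Lean document; each statement's English description precedes it below -/
import Mathlib

section
/- (Fracture) Every type X is equivalent to the pullback of its closed-modal unit ●η○ : ●X → ●○X against the closed unit η● : ○X → ●○X; that is, X ≃ Σ (p : ●X × ○X), (●η○)(p.1) = η●(p.2). -/
/-- The closed modality: quotient of X ⊕ φ identifying `inl x` with `inr b`. -/
def Closed (φ : Prop) (X : Type) : Type :=
  Quot (fun a b : Sum X (PLift φ) => ∃ (x : X) (p : φ), a = Sum.inl x ∧ b = Sum.inr ⟨p⟩)

/-- The closed-modality unit. -/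
def etaClosed (φ : Prop) (X : Type) : X → Closed φ X :=
  fun x => Quot.mk _ (Sum.inl x)

/-- Functorial action of the closed modality on maps. -/
def closedMap (φ : Prop) {X Y : Type} (f : X → Y) : Closed φ X → Closed φ Y :=
  Quot.lift (fun s => Quot.mk _ (s.map f id))
    (by rintro a b ⟨x, p, rfl, rfl⟩; exact Quot.sound ⟨f x, p, rfl, rfl⟩)

/-!
Classically, split on `φ`. If `φ` holds, `●X` is a singleton and `○X ≃ X`, so the pullback is
just `○X ≃ X`. If `¬φ`, the unit `η●` is a bijection, so the pullback is `●X ≃ X`. In both cases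
the comparison map `x ↦ (η● x, η○ x)` is the equivalence.
-/

namespace Closed

variable {φ : Prop} {X : Type}

theorem subsingleton_of_prop (p : φ) : Subsingleton (Closed φ X) := by
  have toPoint (a : Closed φ X) : a = Quot.mk _ (Sum.inr ⟨p⟩) := by
    induction a using Quot.ind with
    | mk s =>
      rcases s with x | _
      · exact Quot.sound ⟨x, p, rfl, rfl⟩
      · rfl
  exact ⟨fun a b => (toPoint a).trans (toPoint b).symm⟩

theorem etaClosed_injective_of_not (h : ¬φ) : Function.Injective (etaClosed φ X) := fun _ _ e =>
  congrArg (Quot.lift (fun s : X ⊕ PLift φ => s.elim id fun p => (h p.down).elim)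
    (by rintro _ _ ⟨_, p, rfl, rfl⟩; exact (h p).elim)) e

theorem etaClosed_surjective_of_not (h : ¬φ) : Function.Surjective (etaClosed φ X) := by
  rintro ⟨x | p⟩
  · exact ⟨x, rfl⟩
  · exact (h p.down).elim

end Closed

/-- (Fracture) Every type X is equivalent to the pullback of `●η○ : ●X → ●○X`
against `η● : ○X → ●○X`. -/
theorem fracture (φ : Prop) (X : Type) :
    Nonempty (X ≃
      {p : Closed φ X × (φ → X) //
        closedMap φ (fun x => (fun _ => x : φ → X)) p.1 = etaClosed φ (φ → X) p.2}) := by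
  refine ⟨Equiv.ofBijective (fun x => ⟨(etaClosed φ X x, fun _ => x), rfl⟩) ⟨?_, ?_⟩⟩
  · intro x y e
    by_cases h : φ
    · exact congrFun (congrArg (fun q => q.1.2) e) h
    · exact Closed.etaClosed_injective_of_not h (congrArg (fun q => q.1.1) e)
  · rintro ⟨⟨c, g⟩, hc⟩
    by_cases h : φ
    · have := Closed.subsingleton_of_prop (X := X) h
      exact ⟨g h, Subtype.ext (Prod.ext (Subsingleton.elim _ _) (funext fun _ => rfl))⟩
    · obtain ⟨x, rfl⟩ := Closed.etaClosed_surjective_of_not h c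
      exact ⟨x, Subtype.ext (Prod.ext rfl (Closed.etaClosed_injective_of_not h hc))⟩
end

section
/- Any function from a concrete type to an abstract type is constant on the component determined by φ: if X is concrete and Z is abstract (the unit Z → (φ → Z) is an equivalence), then any f : X → Z is a constant function. -/
/-- Any function from a concrete type to an abstract type is constant. -/
theorem concrete_to_abstract_constant (φ : Prop) (X Z : Type)
    (hX : φ → (Nonempty X ∧ ∀ x y : X, x = y))
    (hZ : Function.Bijective (fun (z : Z) => (fun (_ : φ) => z : φ → Z)))
    (f : X → Z) : ∀ x x' : X, f x = f x' :=
  fun x x' => hZ.injective <| funext fun h => congrArg f ((hX h).2 x x')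
end

section
/- The sealing construction is a monad: defining T X := Σ ((c, b) : ●X × ○X), (●η○) c ≤ η● b over a preordered setting where the order on ●○X is induced pointwise, the unit η x := (η● x, η○ x) and the multiplication given by the modal functorial actions of the projections satisfy the monad laws (left unit, right unit, associativity). -/
variable {C A : Type} [Preorder A]

/-- Concrete component of the sealing monad T at a phased type (C, A, α):
pairs of an implementation and an upper-bounding specification. -/
def TCon (α : C → A) : Type := {p : C × A // α p.1 ≤ p.2}

/-- Abstraction function of T (C, A, α): project the specification. -/
def Tabs (α : C → A) : TCon α → A := fun p => p.val.2

/-- Unit of the sealing monad. -/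
def Tunit (α : C → A) : C → TCon α := fun c => ⟨(c, α c), le_refl _⟩

/-- Multiplication of the sealing monad (uses transitivity of ≤). -/
def Tmul (α : C → A) : TCon (Tabs α) → TCon α :=
  fun q => ⟨(q.val.1.val.1, q.val.2), le_trans q.val.1.prop q.prop⟩

/-- Functorial action of T on a morphism whose abstract component is the
identity, given a commuting square. -/
def Tmap {C' : Type} {α : C → A} {α' : C' → A} (f : C → C')
    (h : ∀ c, α' (f c) = α c) : TCon α → TCon α' :=
  fun p => ⟨(f p.val.1, p.val.2), by rw [h]; exact p.prop⟩

theorem Tmul_Tunit (α : C → A) (p : TCon α) : Tmul α (Tunit (Tabs α) p) = p :=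
  Subtype.ext rfl

theorem Tmul_Tmap_Tunit (α : C → A) (p : TCon α) :
    Tmul α (Tmap (Tunit α) (fun _ => rfl) p) = p :=
  Subtype.ext rfl

theorem Tmul_assoc (α : C → A) (q : TCon (Tabs (Tabs α))) :
    Tmul α (Tmul (Tabs α) q) = Tmul α (Tmap (Tmul α) (fun _ => rfl) q) :=
  Subtype.ext rfl

/-- The sealing construction is a monad: left unit, right unit, and
associativity laws hold. -/
theorem sealing_monad_laws (α : C → A) :
    (∀ p : TCon α, Tmul α (Tunit (Tabs α) p) = p) ∧
    (∀ p : TCon α, Tmul α (Tmap (Tunit α) (fun _ => rfl) p) = p) ∧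
    (∀ q : TCon (Tabs (Tabs α)),
      Tmul α (Tmul (Tabs α) q) = Tmul α (Tmap (Tmul α) (fun _ => rfl) q)) := by
  exact ⟨Tmul_Tunit α, Tmul_Tmap_Tunit α, Tmul_assoc α⟩
end
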